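/- For every integer n ≥ 2, the ℓ¹-spectral distance σ(nK_1, H) ≥ 2 for every graph H on n vertices not isomorphic to nK_1, with equality if and only if H ≅ K_2 + (n-2)K_1. -/

import Mathlib

open SimpleGraph Finset

/-- Adjacency matrix over `ℝ` (classical decidability). -/
noncomputable def adjMatR {n : ℕ} (G : SimpleGraph (Fin n)) : Matrix (Fin n) (Fin n) ℝ :=
  @SimpleGraph.adjMatrix ℝ (Fin n) G (Classical.decRel _) _ _

lemma adjMatR_isHermitian {n : ℕ} (G : SimpleGraph (Fin n)) : (adjMatR G).IsHermitian := by
  have h : (adjMatR G).IsSymm := @SimpleGraph.isSymm_adjMatrix ℝ (Fin n) G (Classical.decRel _) _ _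
  exact Matrix.isHermitian_iff_isSymm.mpr h

/-- Multiset of adjacency eigenvalues (with multiplicity). -/
noncomputable def specMS {n : ℕ} (G : SimpleGraph (Fin n)) : Multiset ℝ :=
  Finset.univ.val.map (adjMatR_isHermitian G).eigenvalues

/-- `i`-th largest adjacency eigenvalue (0-indexed). -/
noncomputable def eigval {n : ℕ} (G : SimpleGraph (Fin n)) (i : ℕ) : ℝ :=
  ((specMS G).sort (· ≥ ·)).getD i 0

/-- Graph energy. -/
noncomputable def energy {n : ℕ} (G : SimpleGraph (Fin n)) : ℝ :=
  ((specMS G).map (fun x => |x|)).sum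

/-- ℓ¹ spectral distance. -/
noncomputable def specDist {n : ℕ} (G H : SimpleGraph (Fin n)) : ℝ :=
  ∑ i ∈ Finset.range n, |eigval G i - eigval H i|

/-- number of edges -/
noncomputable def numEdges {n : ℕ} (G : SimpleGraph (Fin n)) : ℕ := G.edgeSet.ncard

/-- `K_2 + (n-2)K_1`: one edge plus isolated vertices. -/
def oneEdgeG (n : ℕ) : SimpleGraph (Fin n) :=
  SimpleGraph.fromRel (fun u v => (u : ℕ) = 0 ∧ (v : ℕ) = 1)

/-- `P_3 + (n-3)K_1`: a path on 3 vertices plus isolated vertices. -/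
def path3G (n : ℕ) : SimpleGraph (Fin n) :=
  SimpleGraph.fromRel (fun u v => ((u : ℕ) = 0 ∧ (v : ℕ) = 1) ∨ ((u : ℕ) = 1 ∧ (v : ℕ) = 2))

/-- Complete bipartite graph `K_{a,b}` on `Fin (a+b)`. -/
def compBip (a b : ℕ) : SimpleGraph (Fin (a + b)) :=
  SimpleGraph.fromRel (fun u v => (u : ℕ) < a ∧ a ≤ (v : ℕ))

/-- `K_{r,s} + tK_1`: complete bipartite plus `t` isolated vertices. -/
def compBipPlus (r s t : ℕ) : SimpleGraph (Fin (r + s + t)) :=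
  SimpleGraph.fromRel (fun u v => (u : ℕ) < r ∧ r ≤ (v : ℕ) ∧ (v : ℕ) < r + s)

/-- `K_1 + K_{n-1}`: an isolated vertex plus a complete graph. -/
def k1PlusComplete (n : ℕ) : SimpleGraph (Fin n) :=
  SimpleGraph.fromRel (fun u v => (u : ℕ) ≠ 0 ∧ (v : ℕ) ≠ 0)

/-- `(K_1 + K_2) ∇ (n-3)K_1`: join of `K_1 + K_2` with `n-3` isolated vertices. -/
def k1k2JoinEmpty (n : ℕ) : SimpleGraph (Fin n) :=
  SimpleGraph.fromRel (fun u v =>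
    ((u : ℕ) = 1 ∧ (v : ℕ) = 2) ∨ ((u : ℕ) < 3 ∧ 3 ≤ (v : ℕ)))

/-!
Against the edgeless graph, whose spectrum is zero, `σ(nK₁, H)` is the energy `E = ∑ |λᵢ|` of
`H`. Since `∑ λᵢ = tr A = 0`, every `|λᵢ|` is at most `E / 2`, so `2m = ∑ λᵢ² ≤ E² / 2` for the
number `m` of edges, and `E ≥ 2√m ≥ 2`. Equality forces `m = 1`. Conversely, a single edge has
`A³ = A`, so its eigenvalues lie in `{-1, 0, 1}` and `E = ∑ λᵢ² = 2m = 2`.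
-/

theorem two_mul_abs_le_sum_abs_of_sum_eq_zero {ι : Type*} [DecidableEq ι] {s : Finset ι}
    {x : ι → ℝ} (hx : ∑ j ∈ s, x j = 0) {i : ι} (hi : i ∈ s) : 2 * |x i| ≤ ∑ j ∈ s, |x j| := by
  have hxi : x i = -∑ j ∈ s.erase i, x j := by
    rw [eq_neg_iff_add_eq_zero, add_sum_erase s x hi, hx]
  rw [← add_sum_erase s (fun j => |x j|) hi, two_mul, hxi, abs_neg]
  gcongr
  exact abs_sum_le_sum_abs x (s.erase i)

theorem two_mul_sum_sq_le_sq_sum_abs_of_sum_eq_zero {ι : Type*} {s : Finset ι} {x : ι → ℝ}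
    (hx : ∑ i ∈ s, x i = 0) : 2 * ∑ i ∈ s, x i ^ 2 ≤ (∑ i ∈ s, |x i|) ^ 2 := by
  classical
  calc 2 * ∑ i ∈ s, x i ^ 2 = ∑ i ∈ s, |x i| * (2 * |x i|) := by
        rw [mul_sum]; congr! 1 with i; rw [← sq_abs]; ring
    _ ≤ ∑ i ∈ s, |x i| * ∑ j ∈ s, |x j| := by
        gcongr with i hi
        exact two_mul_abs_le_sum_abs_of_sum_eq_zero hx hi
    _ = (∑ i ∈ s, |x i|) ^ 2 := by rw [← sum_mul, sq]

theorem abs_eq_sq_of_pow_three_eq_self {x : ℝ} (hx : x ^ 3 = x) : |x| = x ^ 2 := by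
  have : x * (x ^ 2 - 1) = 0 := by linear_combination hx
  rcases mul_eq_zero.mp this with h | h
  · simp [h]
  · have h₁ : x ^ 2 = 1 := by linear_combination h
    rw [h₁, ← pow_eq_one_iff_of_nonneg (abs_nonneg x) two_ne_zero, sq_abs, h₁]

namespace Matrix.IsHermitian

variable {𝕜 ι : Type*} [RCLike 𝕜] [Fintype ι] [DecidableEq ι] {A : Matrix ι ι 𝕜}

theorem trace_cfc (hA : A.IsHermitian) (f : ℝ → ℝ) :
    (cfc f A).trace = ∑ i, (f (hA.eigenvalues i) : 𝕜) := by
  rw [hA.cfc_eq, IsHermitian.cfc, Unitary.conjStarAlgAut_apply, trace_mul_cycle,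
    Unitary.coe_star_mul_self, one_mul, trace_diagonal]
  rfl

theorem trace_pow (hA : A.IsHermitian) (k : ℕ) :
    (A ^ k).trace = ∑ i, (hA.eigenvalues i : 𝕜) ^ k := by
  rw [← cfc_pow_id (R := ℝ) A k hA.isSelfAdjoint, hA.trace_cfc]
  push_cast
  rfl

theorem eigenvalues_pow_eq_self (hA : A.IsHermitian) {k : ℕ} (hk : A ^ k = A) (i : ι) :
    hA.eigenvalues i ^ k = hA.eigenvalues i := by
  set v : ι → 𝕜 := ⇑(hA.eigenvectorBasis i)
  have hv : v ≠ 0 := (WithLp.ofLp_eq_zero 2).ne.2 <| hA.eigenvectorBasis.orthonormal.ne_zero i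
  have hpow : ∀ m : ℕ, A ^ m *ᵥ v = hA.eigenvalues i ^ m • v := by
    intro m
    induction m with
    | zero => simp
    | succ m ih =>
      rw [pow_succ', ← mulVec_mulVec, ih, mulVec_smul, hA.mulVec_eigenvectorBasis, smul_smul,
        pow_succ]
  have hk' := hpow k
  rw [hk, hA.mulVec_eigenvectorBasis] at hk'
  exact smul_left_injective ℝ hv hk'.symm

end Matrix.IsHermitian

namespace SimpleGraph

variable {V W : Type*}

theorem Iso.ncard_edgeSet_eq {G : SimpleGraph V} {G' : SimpleGraph W} (f : G ≃g G') :
    G.edgeSet.ncard = G'.edgeSet.ncard := by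
  rw [← Nat.card_coe_set_eq, ← Nat.card_coe_set_eq]
  exact Nat.card_congr f.mapEdgeSet

theorem ncard_edgeSet_pos [Finite V] {G : SimpleGraph V} (hG : G ≠ ⊥) : 0 < G.edgeSet.ncard :=
  (Set.ncard_pos).mpr (edgeSet_nonempty.mpr hG)

theorem exists_eq_edge_of_ncard_edgeSet_eq_one {G : SimpleGraph V} (h : G.edgeSet.ncard = 1) :
    ∃ u v, u ≠ v ∧ G = edge u v := by
  obtain ⟨e, he⟩ := Set.ncard_eq_one.mp h
  induction e using Sym2.ind with | h u v => ?_
  have huv : u ≠ v := G.ne_of_adj (by rw [← mem_edgeSet, he]; rfl)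
  exact ⟨u, v, huv, edgeSet_injective (by rw [he, edgeSet_edge_of_ne huv])⟩

theorem nonempty_iso_edge {u v u' v' : V} (huv : u ≠ v) (huv' : u' ≠ v') :
    Nonempty (edge u v ≃g edge u' v') := by
  obtain ⟨σ, hu, hv⟩ :=
    MulAction.is_two_pretransitive_iff.mp (Equiv.Perm.isMultiplyPretransitive V 2) huv huv'
  rw [Equiv.Perm.smul_def] at hu hv
  exact ⟨⟨σ, by simp [edge_adj, ← hu, ← hv]⟩⟩

variable [DecidableEq V] {α : Type*} [Semiring α]

theorem adjMatrix_edge {u v : V} (huv : u ≠ v) :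
    (edge u v).adjMatrix α = Matrix.single u v 1 + Matrix.single v u 1 := by
  ext x y
  simp only [adjMatrix_apply, edge_adj, Matrix.add_apply, Matrix.single_apply]
  split_ifs <;> grind

theorem adjMatrix_edge_pow_three [Fintype V] {u v : V} (huv : u ≠ v) :
    (edge u v).adjMatrix α ^ 3 = (edge u v).adjMatrix α := by
  simp [adjMatrix_edge huv, pow_succ, add_mul, mul_add, Matrix.single_mul_single_of_ne, huv,
    huv.symm]

end SimpleGraph

section Spectrum

variable {n : ℕ} (G : SimpleGraph (Fin n))

theorem oneEdgeG_eq_edge (hn : 2 ≤ n) : oneEdgeG n = edge ⟨0, by omega⟩ ⟨1, by omega⟩ := by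
  ext x y
  simp [oneEdgeG, edge_adj, Fin.ext_iff]
  omega

theorem nonempty_iso_oneEdgeG_iff (hn : 2 ≤ n) :
    Nonempty (G ≃g oneEdgeG n) ↔ numEdges G = 1 := by
  rw [oneEdgeG_eq_edge hn]
  constructor
  · rintro ⟨f⟩
    rw [numEdges, f.ncard_edgeSet_eq, edgeSet_edge_of_ne (by simp), Set.ncard_singleton]
  · intro h
    obtain ⟨u, v, huv, rfl⟩ := exists_eq_edge_of_ncard_edgeSet_eq_one h
    exact nonempty_iso_edge huv (by simp)

theorem adjMatR_eq_adjMatrix [DecidableRel G.Adj] : adjMatR G = G.adjMatrix ℝ := by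
  unfold adjMatR
  congr

theorem numEdges_eq_card_edgeFinset [Fintype G.edgeSet] : numEdges G = #G.edgeFinset := by
  rw [numEdges, ← Set.ncard_coe_finset, coe_edgeFinset]

theorem trace_adjMatR : (adjMatR G).trace = 0 := by
  classical
  rw [adjMatR_eq_adjMatrix, trace_adjMatrix]

theorem trace_adjMatR_sq : (adjMatR G ^ 2).trace = 2 * numEdges G := by
  classical
  rw [adjMatR_eq_adjMatrix, sq, Matrix.trace, numEdges_eq_card_edgeFinset]
  simp only [Matrix.diag_apply, adjMatrix_mul_self_apply_self]
  rw [← Nat.cast_sum, sum_degrees_eq_twice_card_edges]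
  push_cast
  rfl

theorem sum_eigenvalues_adjMatR : ∑ i, (adjMatR_isHermitian G).eigenvalues i = 0 := by
  classical
  have h := (adjMatR_isHermitian G).trace_eq_sum_eigenvalues
  rw [trace_adjMatR] at h
  exact_mod_cast h.symm

theorem sum_sq_eigenvalues_adjMatR :
    ∑ i, (adjMatR_isHermitian G).eigenvalues i ^ 2 = 2 * numEdges G := by
  classical
  have h := (adjMatR_isHermitian G).trace_pow 2
  rw [trace_adjMatR_sq] at h
  exact_mod_cast h.symm

theorem energy_eq_sum_abs_eigenvalues :
    energy G = ∑ i, |(adjMatR_isHermitian G).eigenvalues i| := by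
  rw [energy, specMS, Multiset.map_map]
  rfl

theorem energy_nonneg : 0 ≤ energy G := by
  rw [energy_eq_sum_abs_eigenvalues]
  exact sum_nonneg fun i _ => abs_nonneg _

theorem four_mul_numEdges_le_energy_sq : 4 * (numEdges G : ℝ) ≤ energy G ^ 2 := by
  rw [energy_eq_sum_abs_eigenvalues, show (4 : ℝ) = 2 * 2 by norm_num, mul_assoc,
    ← sum_sq_eigenvalues_adjMatR]
  exact two_mul_sum_sq_le_sq_sum_abs_of_sum_eq_zero (sum_eigenvalues_adjMatR G)

theorem energy_eq_two_of_numEdges_eq_one (h : numEdges G = 1) : energy G = 2 := by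
  classical
  obtain ⟨u, v, huv, rfl⟩ := exists_eq_edge_of_ncard_edgeSet_eq_one h
  have hcube := (adjMatR_isHermitian (edge u v)).eigenvalues_pow_eq_self
    (by rw [adjMatR_eq_adjMatrix, adjMatrix_edge_pow_three huv])
  rw [energy_eq_sum_abs_eigenvalues]
  calc ∑ i, |(adjMatR_isHermitian (edge u v)).eigenvalues i|
      = ∑ i, (adjMatR_isHermitian (edge u v)).eigenvalues i ^ 2 :=
        sum_congr rfl fun i _ => abs_eq_sq_of_pow_three_eq_self (hcube i)
    _ = 2 := by rw [sum_sq_eigenvalues_adjMatR, h]; norm_num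

theorem eigval_bot (i : ℕ) : eigval (⊥ : SimpleGraph (Fin n)) i = 0 := by
  have h0 : (adjMatR_isHermitian (⊥ : SimpleGraph (Fin n))).eigenvalues = 0 := by
    classical
    rw [Matrix.IsHermitian.eigenvalues_eq_zero_iff, adjMatR_eq_adjMatrix]
    ext
    simp
  rw [eigval, List.getD_eq_getElem?_getD]
  cases h : ((specMS ⊥).sort (· ≥ ·))[i]? with
  | none => rfl
  | some x =>
    have hx := List.mem_of_getElem? h
    rw [Multiset.mem_sort, specMS, h0] at hx
    exact Multiset.eq_of_mem_replicate (by simpa using hx)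

theorem length_sort_specMS : ((specMS G).sort (· ≥ ·)).length = n := by
  simp [specMS]

theorem specDist_bot_left : specDist ⊥ G = energy G := by
  set l := (specMS G).sort (· ≥ ·)
  calc specDist ⊥ G = ∑ i ∈ range l.length, |l.getD i 0| := by
        rw [length_sort_specMS]
        simp only [specDist, eigval_bot, zero_sub, abs_neg]
        rfl
    _ = (l.map (|·|)).sum := by
        rw [sum_range, ← Fin.sum_univ_fun_getElem]
        simp only [List.getD_eq_getElem, Fin.is_lt]
    _ = energy G := by
        rw [energy, ← Multiset.sort_eq (specMS G) (· ≥ ·), Multiset.map_coe, Multiset.sum_coe]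

end Spectrum

theorem cs_empty_graph (n : ℕ) (hn : 2 ≤ n) (H : SimpleGraph (Fin n))
    (hH : ¬ Nonempty (H ≃g (⊥ : SimpleGraph (Fin n)))) :
    2 ≤ specDist (⊥ : SimpleGraph (Fin n)) H ∧
      (specDist (⊥ : SimpleGraph (Fin n)) H = 2 ↔ Nonempty (H ≃g oneEdgeG n)) := by
  have hm : (1 : ℝ) ≤ numEdges H := by
    have : H ≠ ⊥ := by rintro rfl; exact hH ⟨Iso.refl⟩
    exact_mod_cast ncard_edgeSet_pos this
  have hE := four_mul_numEdges_le_energy_sq H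
  have hE₀ := energy_nonneg H
  rw [specDist_bot_left, nonempty_iso_oneEdgeG_iff H hn]
  refine ⟨by nlinarith, fun h₂ => ?_, energy_eq_two_of_numEdges_eq_one H⟩
  have : (numEdges H : ℝ) ≤ 1 := by nlinarith
  exact_mod_cast le_antisymm this hm
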